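/- Let f, g, f', g' be θ-homogeneous superpolynomials of θ-degrees r, s, r', s' respectively. Then ⟨f, (f'·g')·g⟩ = ± ⟨f·g, f'·g'⟩, where the sign depends only on the θ-degrees r, s, r', s'; explicitly, whenever both sides are nonzero the sign equals (−1)^{C(s,2) + C(r,2) + C(s−r,2)} with C(m,2) = m(m−1)/2. -/

import Mathlib

open MvPolynomial

/-- Superspace of rank `n`: elements are represented by their coefficients on the
basis of `θ`-monomials `θ_S` (for `S` a subset of `Fin n`, with factors in increasing order),
with coefficients in the polynomial ring `ℚ[x_1, …, x_n]`. -/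
abbrev Superspace (n : ℕ) := Finset (Fin n) → MvPolynomial (Fin n) ℚ

/-- The partial derivative `∂_i` with respect to the commuting variable `x_i`,
treating the `θ`-variables as constants. -/
noncomputable def xDeriv {n : ℕ} (i : Fin n) (F : Superspace n) : Superspace n :=
  fun S => MvPolynomial.pderiv i (F S)

/-- The partial derivative `∂_i^θ` with respect to the anticommuting variable `θ_i`:
it is `ℚ[x]`-linear and sends `θ_{j_1} ⋯ θ_{j_r}` (with `j_1 < ⋯ < j_r`) to
`(-1)^{s-1} θ_{j_1} ⋯ ω(θ_{j_s}) ⋯ θ_{j_r}` if `j_s = i`, and to `0` if `i` does not occur. -/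
noncomputable def thetaDeriv {n : ℕ} (i : Fin n) (F : Superspace n) : Superspace n :=
  fun S => if i ∈ S then 0
    else ((-1 : ℚ) ^ (S.filter (fun j => j < i)).card) • F (insert i S)

/-- The differential operator `∂(p)` (replace each `x_i` in `p` by `∂_i`) applied to `q`. -/
noncomputable def diffOp {n : ℕ} (p q : MvPolynomial (Fin n) ℚ) : MvPolynomial (Fin n) ℚ :=
  ∑ a ∈ p.support, ∑ b ∈ q.support,
    (p.coeff a * q.coeff b * ∏ i : Fin n, ((b i).descFactorial (a i) : ℚ)) •
      MvPolynomial.monomial (b - a) (1 : ℚ)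

/-- The action of the polynomial ring `ℚ[x_1, …, x_n]` on superspace, `f · g := ∂(f)(g)`. -/
noncomputable def pAct {n : ℕ} (p : MvPolynomial (Fin n) ℚ) (F : Superspace n) : Superspace n :=
  fun S => diffOp p (F S)

/-- Iterated `θ`-derivative along a list (leftmost applied last). -/
noncomputable def thetaDerivList {n : ℕ} (l : List (Fin n)) (F : Superspace n) : Superspace n :=
  l.foldr thetaDeriv F

/-- The action of superspace on itself, `f · g := ∂(f)(g)`, where `∂(f)` is obtained
from `f` by replacing every `x_i` by `∂_i` and every `θ_i` by `∂_i^θ`. -/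
noncomputable def superAct {n : ℕ} (f g : Superspace n) : Superspace n :=
  ∑ T : Finset (Fin n), (fun S => diffOp (f T) (thetaDerivList (T.sort (· ≤ ·)) g S))

/-- The diagonal action of a permutation `w` on superspace:
`w · x_i = x_{w(i)}` and `w · θ_i = θ_{w(i)}`. -/
noncomputable def permAct {n : ℕ} (w : Equiv.Perm (Fin n)) (F : Superspace n) : Superspace n :=
  fun S =>
    ((-1 : ℚ) ^ (((S.image w.symm) ×ˢ (S.image w.symm)).filter
        (fun p => p.1 < p.2 ∧ w p.2 < w p.1)).card) •
      MvPolynomial.rename w (F (S.image w.symm))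

/-- The supermonomial `x^a · θ_T`. -/
noncomputable def sMono {n : ℕ} (a : Fin n →₀ ℕ) (T : Finset (Fin n)) : Superspace n :=
  fun S => if S = T then MvPolynomial.monomial a (1 : ℚ) else 0

/-- The `a`-superspace Vandermonde
`Δ_n(a) = ε_n · (x_1^{a_1} ⋯ x_r^{a_r} x_{r+1}^{k-1} ⋯ x_n^0 · θ_1 ⋯ θ_r)` (with `n = k + r`). -/
noncomputable def superVandermonde (n r : ℕ) (a : Fin r → ℕ) : Superspace n :=
  ∑ w : Equiv.Perm (Fin n),
    ((Equiv.Perm.sign w : ℤ) : ℚ) •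
      permAct w (sMono
        (Finsupp.equivFunOnFinite.symm
          (fun i : Fin n => if h : (i : ℕ) < r then a ⟨(i : ℕ), h⟩ else n - 1 - (i : ℕ)))
        (Finset.univ.filter (fun i : Fin n => (i : ℕ) < r)))

/-- Multiplication in superspace (the `θ`-variables anticommute). -/
noncomputable def superMul {n : ℕ} (F G : Superspace n) : Superspace n :=
  fun S => ∑ T ∈ S.powerset,
    ((-1 : ℚ) ^ ((T ×ˢ (S \ T)).filter (fun p => p.2 < p.1)).card) • (F T * G (S \ T))

/-- The bilinear form `⟨f, g⟩` = constant term of `∂(f)(g)`. -/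
noncomputable def superPairing {n : ℕ} (f g : Superspace n) : ℚ :=
  MvPolynomial.constantCoeff (superAct f g ∅)

/-- `V_n(a)`: the smallest subspace of superspace containing `Δ_n(a)` which is closed
under the partial derivatives `∂_1, …, ∂_n`. -/
noncomputable def Vspace (n r : ℕ) (a : Fin r → ℕ) : Submodule ℚ (Superspace n) :=
  sInf {W : Submodule ℚ (Superspace n) |
    superVandermonde n r a ∈ W ∧ ∀ i : Fin n, ∀ F ∈ W, xDeriv i F ∈ W}

/-- `W_n(a)`: the smallest subspace of superspace containing `Δ_n(a)` which is closed
under `∂_1, …, ∂_n` and `∂_1^θ, …, ∂_n^θ`. -/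
noncomputable def Wspace (n r : ℕ) (a : Fin r → ℕ) : Submodule ℚ (Superspace n) :=
  sInf {W : Submodule ℚ (Superspace n) |
    superVandermonde n r a ∈ W ∧ (∀ i : Fin n, ∀ F ∈ W, xDeriv i F ∈ W) ∧
      (∀ i : Fin n, ∀ F ∈ W, thetaDeriv i F ∈ W)}

/-- A superpolynomial is `θ`-homogeneous of `θ`-degree `r`. -/
def isThetaHomog {n : ℕ} (r : ℕ) (F : Superspace n) : Prop :=
  ∀ S : Finset (Fin n), S.card ≠ r → F S = 0

/-- An `(n,k,s)`-staircase: a shuffle of `(s-1, …, s-1)` (`n-k` copies) with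
`(k-1, k-2, …, 1, 0)`; `T` records the positions of the decreasing staircase part. -/
def isStaircase3 (n k s : ℕ) (b : Fin n → ℕ) : Prop :=
  ∃ T : Finset (Fin n), T.card = k ∧
    ∀ i : Fin n, b i = if i ∈ T then k - 1 - (T.filter (fun j => j < i)).card else s - 1

/-- `(n,k,s)`-substaircase sequences: componentwise `≤` at least one `(n,k,s)`-staircase. -/
def isSubstaircase3 (n k s : ℕ) (c : Fin n → ℕ) : Prop :=
  ∃ b : Fin n → ℕ, isStaircase3 n k s b ∧ ∀ i, c i ≤ b i

/-- The (signless) Stirling numbers of the second kind. -/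
def stirling2 : ℕ → ℕ → ℕ
  | 0, 0 => 1
  | 0, _ + 1 => 0
  | _ + 1, 0 => 0
  | n + 1, k + 1 => stirling2 n k + (k + 1) * stirling2 n (k + 1)

/-- The ideal `I_{n,k,s} = ⟨x_1^s, …, x_n^s, e_n, e_{n-1}, …, e_{n-k+1}⟩`. -/
noncomputable def Inks (n k s : ℕ) : Ideal (MvPolynomial (Fin n) ℚ) :=
  Ideal.span ((Set.range fun i : Fin n => (MvPolynomial.X i : MvPolynomial (Fin n) ℚ) ^ s) ∪
    ((fun d => MvPolynomial.esymm (Fin n) ℚ d) '' {d : ℕ | n - k < d ∧ d ≤ n}))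

/-- The `q`-number `[m]_q = 1 + q + ⋯ + q^{m-1}`. -/
noncomputable def qNum (m : ℕ) : Polynomial ℕ := ∑ i ∈ Finset.range m, Polynomial.X ^ i

/-- The `q`-factorial `[k]!_q`. -/
noncomputable def qFactorial : ℕ → Polynomial ℕ
  | 0 => 1
  | m + 1 => qNum (m + 1) * qFactorial m

/-- The `q`-Stirling numbers `Stir_q(n,k)`. -/
noncomputable def qStirling : ℕ → ℕ → Polynomial ℕ
  | 0, 0 => 1
  | 0, _ + 1 => 0
  | _ + 1, 0 => 0
  | n + 1, k + 1 => qStirling n k + qNum (k + 1) * qStirling n (k + 1)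

/-- The submodule of superspace of `x`-homogeneous elements of `x`-degree `d`. -/
noncomputable def xHomogSub (n d : ℕ) : Submodule ℚ (Superspace n) :=
  Submodule.pi Set.univ
    (fun _ : Finset (Fin n) => MvPolynomial.homogeneousSubmodule (Fin n) ℚ d)

/-- The submodule of superspace of `θ`-homogeneous elements of `θ`-degree `j`. -/
noncomputable def thetaHomogSub (n j : ℕ) : Submodule ℚ (Superspace n) where
  carrier := {F | ∀ S : Finset (Fin n), S.card ≠ j → F S = 0}
  add_mem' := by
    intro F G hF hG S hS
    show F S + G S = 0
    rw [hF S hS, hG S hS, add_zero]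
  zero_mem' := by intro S _; rfl
  smul_mem' := by
    intro c F hF S hS
    show c • F S = 0
    rw [hF S hS, smul_zero]

/-!
Both pairings expand as double sums over pairs `(A, C)` of `θ`-monomials. On the `x`-side,
`⟨p, ∂(q) t⟩` is the constant term of `∂(pq) t`, hence symmetric in `p` and `q`. On the
`θ`-side, differentiating `g` along `θ_C` and reading off `θ_A`, or along `θ_A` and reading
off `θ_C`, both pick the coefficient of `g` at `θ_{A ∪ C}`, with signs given by the inversions
of `C` against `A` and of `A` against `C`. These inversion counts add up to `|A| |C|`, and
homogeneity forces `|A| = r`, `|C| = s - r`, which turns the discrepancy into the stated sign.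
-/

theorem Nat.add_choose_two (a b : ℕ) : (a + b).choose 2 = a.choose 2 + b.choose 2 + a * b := by
  induction b with
  | zero => simp
  | succ b ih =>
    rw [← add_assoc, Nat.choose_succ_succ', ih, Nat.choose_succ_succ' b, Nat.choose_one_right,
      Nat.choose_one_right]
    ring

section DiffPairing

variable {n : ℕ}

theorem coeff_diffOp (p q : MvPolynomial (Fin n) ℚ) (m : Fin n →₀ ℕ) :
    coeff m (diffOp p q) =
      ∑ a ∈ p.support, p.coeff a * q.coeff (m + a) *
        ∏ i : Fin n, (((m + a) i).descFactorial (a i) : ℚ) := by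
  rw [diffOp, coeff_sum]
  refine Finset.sum_congr rfl fun a _ => ?_
  rw [coeff_sum, Finset.sum_eq_single (m + a)]
  · simp [coeff_monomial]
  · intro b _ hb
    by_cases hab : a ≤ b
    · have hm : b - a ≠ m := fun h => hb (by rw [← h, tsub_add_cancel_of_le hab])
      simp [coeff_monomial, hm]
    · obtain ⟨i, hi⟩ : ∃ i, b i < a i := by
        by_contra! h
        exact hab fun i => h i
      simp [Finset.prod_eq_zero (Finset.mem_univ i), Nat.descFactorial_eq_zero_iff_lt.mpr hi]
  · intro h
    simp [notMem_support_iff.mp h]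

theorem diffOp_zero_left (q : MvPolynomial (Fin n) ℚ) : diffOp 0 q = 0 := by
  simp [diffOp]

theorem diffOp_zero_right (p : MvPolynomial (Fin n) ℚ) : diffOp p 0 = 0 := by
  simp [diffOp]

theorem diffOp_smul_right (c : ℚ) (p q : MvPolynomial (Fin n) ℚ) :
    diffOp p (c • q) = c • diffOp p q := by
  ext m
  simp only [coeff_diffOp, coeff_smul, smul_eq_mul, Finset.mul_sum]
  exact Finset.sum_congr rfl fun a _ => by ring

noncomputable def diffPairing (p q : MvPolynomial (Fin n) ℚ) : ℚ :=
  constantCoeff (diffOp p q)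

theorem diffPairing_eq_sum (p q : MvPolynomial (Fin n) ℚ) :
    diffPairing p q =
      ∑ a ∈ p.support, p.coeff a * q.coeff a * ∏ i : Fin n, ((a i).factorial : ℚ) := by
  rw [diffPairing, constantCoeff_eq, coeff_diffOp]
  simp [Nat.descFactorial_self]

theorem diffPairing_zero_right (p : MvPolynomial (Fin n) ℚ) : diffPairing p 0 = 0 := by
  simp [diffPairing_eq_sum]

theorem diffPairing_comm (p q : MvPolynomial (Fin n) ℚ) : diffPairing p q = diffPairing q p := by
  rw [diffPairing_eq_sum, diffPairing_eq_sum,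
    Finset.sum_subset (Finset.subset_union_left (s₂ := q.support)),
    Finset.sum_subset (Finset.subset_union_left (s₁ := q.support) (s₂ := p.support)),
    Finset.union_comm]
  · exact Finset.sum_congr rfl fun a _ => by ring
  all_goals
    intro a _ ha
    rw [notMem_support_iff.mp ha]
    ring

theorem diffPairing_smul_right (c : ℚ) (p q : MvPolynomial (Fin n) ℚ) :
    diffPairing p (c • q) = c * diffPairing p q := by
  rw [diffPairing, diffOp_smul_right, constantCoeff_smul, smul_eq_mul, diffPairing]

theorem diffPairing_sum_right {ι : Type*} (s : Finset ι) (p : MvPolynomial (Fin n) ℚ)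
    (q : ι → MvPolynomial (Fin n) ℚ) :
    diffPairing p (∑ i ∈ s, q i) = ∑ i ∈ s, diffPairing p (q i) := by
  simp only [diffPairing_eq_sum, coeff_sum, Finset.mul_sum, Finset.sum_mul]
  exact Finset.sum_comm

theorem diffPairing_sum_left {ι : Type*} (s : Finset ι) (p : ι → MvPolynomial (Fin n) ℚ)
    (q : MvPolynomial (Fin n) ℚ) :
    diffPairing (∑ i ∈ s, p i) q = ∑ i ∈ s, diffPairing (p i) q := by
  simp only [diffPairing_comm _ q, diffPairing_sum_right]

theorem diffPairing_diffOp_eq_sum (p q t : MvPolynomial (Fin n) ℚ) :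
    diffPairing p (diffOp q t) =
      ∑ a ∈ p.support, ∑ b ∈ q.support, p.coeff a * q.coeff b * t.coeff (a + b) *
        ∏ i : Fin n, ((a i + b i).factorial : ℚ) := by
  rw [diffPairing_eq_sum]
  refine Finset.sum_congr rfl fun a _ => ?_
  rw [coeff_diffOp, Finset.mul_sum, Finset.sum_mul]
  refine Finset.sum_congr rfl fun b _ => ?_
  have hfac : ∀ i, (((a + b) i).descFactorial (b i) : ℚ) * (a i).factorial =
      (a i + b i).factorial := fun i => by
    rw [Finsupp.add_apply, mul_comm]
    have h := Nat.factorial_mul_descFactorial (Nat.le_add_left (b i) (a i))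
    rw [Nat.add_sub_cancel] at h
    exact_mod_cast h
  simp only [← hfac, Finset.prod_mul_distrib]
  ring

theorem diffPairing_diffOp_comm (p q t : MvPolynomial (Fin n) ℚ) :
    diffPairing p (diffOp q t) = diffPairing q (diffOp p t) := by
  rw [diffPairing_diffOp_eq_sum, diffPairing_diffOp_eq_sum, Finset.sum_comm]
  refine Finset.sum_congr rfl fun b _ => Finset.sum_congr rfl fun a _ => ?_
  simp only [add_comm b a, add_comm (b _)]
  ring

end DiffPairing

section ThetaDeriv

variable {n : ℕ}

def ltPairCount (S T : Finset (Fin n)) : ℕ :=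
  ∑ t ∈ T, (S.filter (· < t)).card

theorem ltPairCount_empty_left (T : Finset (Fin n)) : ltPairCount ∅ T = 0 := by
  simp [ltPairCount]

theorem ltPairCount_insert_left {i : Fin n} {S T : Finset (Fin n)} (hiS : i ∉ S)
    (hiT : ∀ t ∈ T, i < t) : ltPairCount (insert i S) T = ltPairCount S T + T.card := by
  rw [ltPairCount, ltPairCount, Finset.card_eq_sum_ones T, ← Finset.sum_add_distrib]
  refine Finset.sum_congr rfl fun t ht => ?_
  rw [Finset.filter_insert, if_pos (hiT t ht),
    Finset.card_insert_of_notMem fun h => hiS (Finset.mem_of_mem_filter i h)]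

theorem ltPairCount_insert_right {i : Fin n} {S T : Finset (Fin n)} (hiT : i ∉ T) :
    ltPairCount S (insert i T) = (S.filter (· < i)).card + ltPairCount S T :=
  Finset.sum_insert hiT

theorem ltPairCount_add_ltPairCount {A C : Finset (Fin n)} (hd : Disjoint A C) :
    ltPairCount A C + ltPairCount C A = A.card * C.card := by
  simp only [ltPairCount, Finset.card_filter]
  rw [Finset.sum_comm (s := A), ← Finset.sum_add_distrib, mul_comm, ← smul_eq_mul,
    ← Finset.sum_const]
  refine Finset.sum_congr rfl fun c hc => ?_
  rw [← Finset.sum_add_distrib, Finset.card_eq_sum_ones]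
  refine Finset.sum_congr rfl fun a ha => ?_
  have hac : a ≠ c := fun h => Finset.disjoint_left.mp hd ha (h ▸ hc)
  rcases hac.lt_or_gt with h | h <;> simp [h, h.not_gt]

theorem thetaDerivList_apply_of_pairwise (l : List (Fin n)) (hl : l.Pairwise (· < ·))
    (F : Superspace n) (S : Finset (Fin n)) :
    thetaDerivList l F S =
      if Disjoint l.toFinset S then
        ((-1 : ℚ) ^ (ltPairCount S l.toFinset + l.length.choose 2)) • F (l.toFinset ∪ S)
      else 0 := by
  induction l generalizing S with
  | nil => simp [thetaDerivList, ltPairCount]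
  | cons i l ih =>
    obtain ⟨hil, hl⟩ := List.pairwise_cons.mp hl
    have hiL : i ∉ l.toFinset := fun h => (hil i (List.mem_toFinset.mp h)).false
    change thetaDeriv i (thetaDerivList l F) S = _
    by_cases hiS : i ∈ S
    · simp [thetaDeriv, hiS]
    rw [thetaDeriv, if_neg hiS, ih hl]
    simp only [List.toFinset_cons, Finset.disjoint_insert_left, Finset.disjoint_insert_right,
      hiS, hiL, not_false_eq_true, true_and]
    split_ifs
    · rw [smul_smul, ← pow_add,
        ltPairCount_insert_left hiS fun t ht => hil t (List.mem_toFinset.mp ht),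
        ltPairCount_insert_right hiL, Finset.union_insert, Finset.insert_union,
        List.toFinset_card_of_nodup hl.nodup, List.length_cons, Nat.choose_succ_succ',
        Nat.choose_one_right]
      congr 2
      ring
    · rw [smul_zero]

theorem thetaDerivList_sort_apply (T : Finset (Fin n)) (F : Superspace n) (S : Finset (Fin n)) :
    thetaDerivList (T.sort (· ≤ ·)) F S =
      if Disjoint T S then ((-1 : ℚ) ^ (ltPairCount S T + T.card.choose 2)) • F (T ∪ S)
      else 0 := by
  simpa only [Finset.sort_toFinset, Finset.length_sort] using
    thetaDerivList_apply_of_pairwise _ (Finset.sortedLT_sort T).pairwise F S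

theorem neg_one_pow_ltPairCount_swap {r s : ℕ} {A C : Finset (Fin n)} (hd : Disjoint A C)
    (hA : A.card = r) (hAC : (A ∪ C).card = s) :
    (-1 : ℚ) ^ (A.card.choose 2 + (ltPairCount A C + C.card.choose 2)) =
      (-1 : ℚ) ^ (s.choose 2 + r.choose 2 + (s - r).choose 2) *
        (-1 : ℚ) ^ (C.card.choose 2 + (ltPairCount C A + A.card.choose 2)) := by
  have hC : C.card = s - r := by
    rw [← hAC, Finset.card_union_of_disjoint hd, hA, Nat.add_sub_cancel_left]
  have hs : r + (s - r) = s := by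
    rw [← hC, ← hA, ← Finset.card_union_of_disjoint hd, hAC]
  have hcount := ltPairCount_add_ltPairCount hd
  have hchoose := Nat.add_choose_two r (s - r)
  rw [hs] at hchoose
  rw [hA, hC] at hcount ⊢
  rw [← pow_add]
  refine neg_one_pow_congr ?_
  generalize r * (s - r) = m at hcount hchoose
  simp only [Nat.even_iff]
  omega

end ThetaDeriv

section SuperPairing

variable {n : ℕ}

theorem superAct_apply (f g : Superspace n) (A : Finset (Fin n)) :
    superAct f g A =
      ∑ C : Finset (Fin n), diffOp (f C) (thetaDerivList (C.sort (· ≤ ·)) g A) :=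
  Finset.sum_apply A _ _

theorem superPairing_eq_sum (f g : Superspace n) :
    superPairing f g =
      ∑ T : Finset (Fin n), (-1 : ℚ) ^ T.card.choose 2 * diffPairing (f T) (g T) := by
  rw [superPairing, superAct_apply, map_sum]
  refine Finset.sum_congr rfl fun T _ => ?_
  rw [thetaDerivList_sort_apply, if_pos (Finset.disjoint_empty_right T), ltPairCount_empty_left,
    Finset.union_empty, zero_add, diffOp_smul_right, constantCoeff_smul, smul_eq_mul]
  rfl

theorem diffPairing_thetaDerivList_swap {r s : ℕ} {f g : Superspace n}
    (hf : isThetaHomog r f) (hg : isThetaHomog s g) (X : Superspace n) (A C : Finset (Fin n)) :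
    (-1 : ℚ) ^ A.card.choose 2 *
        diffPairing (f A) (diffOp (X C) (thetaDerivList (C.sort (· ≤ ·)) g A)) =
      (-1 : ℚ) ^ (s.choose 2 + r.choose 2 + (s - r).choose 2) *
        ((-1 : ℚ) ^ C.card.choose 2 *
          diffPairing (diffOp (f A) (thetaDerivList (A.sort (· ≤ ·)) g C)) (X C)) := by
  rw [thetaDerivList_sort_apply, thetaDerivList_sort_apply]
  by_cases hd : Disjoint A C
  swap
  · rw [if_neg (fun h => hd h.symm), if_neg hd, diffOp_zero_right, diffOp_zero_right,
      diffPairing_zero_right, diffPairing_comm, diffPairing_zero_right]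
    ring
  rw [if_pos hd.symm, if_pos hd, Finset.union_comm C A, diffOp_smul_right, diffOp_smul_right,
    diffPairing_smul_right, diffPairing_comm (_ • _), diffPairing_smul_right,
    diffPairing_diffOp_comm (f A) (X C)]
  set K := diffPairing (X C) (diffOp (f A) (g (A ∪ C))) with hK
  by_cases hK0 : K = 0
  · simp [hK0]
  have hA : A.card = r := by
    by_contra h
    exact hK0 (by rw [hK, hf A h, diffOp_zero_left, diffPairing_zero_right])
  have hAC : (A ∪ C).card = s := by
    by_contra h
    exact hK0 (by rw [hK, hg _ h, diffOp_zero_right, diffPairing_zero_right])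
  rw [← mul_assoc, ← pow_add, neg_one_pow_ltPairCount_swap hd hA hAC]
  ring

end SuperPairing

theorem superPairing_adjoint_sign_general (n : ℕ) (r s : ℕ) (f g f' g' : Superspace n)
    (hf : isThetaHomog r f) (hg : isThetaHomog s g) :
    superPairing f (superAct (superAct f' g') g) =
      (-1 : ℚ) ^ (s.choose 2 + r.choose 2 + (s - r).choose 2) *
        superPairing (superAct f g) (superAct f' g') := by
  simp only [superPairing_eq_sum, superAct_apply (superAct f' g') g, superAct_apply f g,
    diffPairing_sum_right, diffPairing_sum_left, Finset.mul_sum]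
  rw [Finset.sum_comm]
  exact Finset.sum_congr rfl fun C _ => Finset.sum_congr rfl fun A _ =>
    diffPairing_thetaDerivList_swap hf hg _ A C

/-- Lemma 5.3(2): for `θ`-homogeneous `f, g, f', g'` of `θ`-degrees
`r, s, r', s'`, one has `⟨f, (f'·g')·g⟩ = ± ⟨f·g, f'·g'⟩`, the sign being
`(-1)^{C(s,2) + C(r,2) + C(s-r,2)}`. -/
theorem superPairing_adjoint_sign (n : ℕ) (r s r' s' : ℕ) (f g f' g' : Superspace n)
    (hf : isThetaHomog r f) (hg : isThetaHomog s g)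
    (hf' : isThetaHomog r' f') (hg' : isThetaHomog s' g') :
    superPairing f (superAct (superAct f' g') g) =
      (-1 : ℚ) ^ (s.choose 2 + r.choose 2 + (s - r).choose 2) *
        superPairing (superAct f g) (superAct f' g') :=
  superPairing_adjoint_sign_general n r s f g f' g' hf hg
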